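/- Let ψ be analytic and nonvanishing on an annulus r < |ζ| < R with r < 1 < R, let z ∈ ℂ with |z| < 1, and set ψ_z(ζ) = ψ(ζ)/(1 − z/ζ). Then for all integers j, k ≥ 0, the series ∑_{m=0}^∞ [ (ψ_z^{−1})_{j+m+1}·(ψ_z)_{−m−k−1} − (ψ^{−1})_{j+m+1}·ψ_{−m−k−1} ] converges absolutely and its sum equals Q(j)·R(k), where Q(j) = (ψ^{−1})_{j+1} and R(k) = ∫_{|b|=1} b^{k+1} · (z/(b−z)) · ψ(b) db/(2πib). -/

import Mathlib

/-- The `k`-th Fourier coefficient of a function on the unit circle: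
`h_k = ∫_{|ζ|=1} ζ^{−k} h(ζ) dζ/(2πiζ) = (1/2π)∫_0^{2π} e^{−ikθ} h(e^{iθ}) dθ`. -/
noncomputable def fourierCoeff' (h : ℂ → ℂ) (k : ℤ) : ℂ :=
  (1 / (2 * Real.pi)) *
    ∫ θ in (0 : ℝ)..(2 * Real.pi),
      Complex.exp (-(Complex.I * k * θ)) * h (Complex.exp (Complex.I * θ))

/-!
Write `c n` and `b n` for the coefficients of `ψ⁻¹` and `ψ_z`. Multiplying by `ζ⁻¹` shifts
coefficients, so `(ψ_z⁻¹)_n = c n - z c (n + 1)` and `ψ_n = b n - z b (n + 1)`; hence the `m`-th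
term is `u m - u (m + 1)` with `u m = z c (j + m + 1) b (-(m + k))`, and the series telescopes to
`u 0 = c (j + 1) · z b (-k) = Q(j) R(k)`. Absolute convergence comes from the geometric decay of
`c n` as `n → ∞`: the contour of the coefficient integral can be pushed out to a circle of radius
`ρ > 1` inside the annulus, where `ψ⁻¹` is still holomorphic.
-/

open Complex Metric intervalIntegral

theorem hasSum_sub_succ {E : Type*} [AddCommGroup E] [TopologicalSpace E] [IsTopologicalAddGroup E]
    {u : ℕ → E} (hu : Summable u) : HasSum (fun m => u m - u (m + 1)) (u 0) := by
  have hshift := (hasSum_nat_add_iff' 1).2 hu.hasSum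
  simpa using hu.hasSum.sub hshift

theorem summable_norm_sub_succ {E : Type*} [SeminormedAddCommGroup E] {u : ℕ → E}
    (hu : Summable fun m => ‖u m‖) : Summable fun m => ‖u m - u (m + 1)‖ :=
  .of_nonneg_of_le (fun _ => norm_nonneg _) (fun _ => norm_sub_le _ _)
    (hu.add ((summable_nat_add_iff 1).2 hu))

theorem sphere_subset_closedBall_sdiff_ball {X : Type*} [PseudoMetricSpace X] {x : X} {r s ρ : ℝ}
    (hr : r ≤ s) (hρ : s ≤ ρ) : sphere x s ⊆ closedBall x ρ \ ball x r := fun _ hy =>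
  ⟨closedBall_subset_closedBall hρ (sphere_subset_closedBall hy),
    fun h => (mem_ball.1 h).not_ge (mem_sphere.1 hy ▸ hr)⟩

theorem closedBall_sdiff_ball_subset {E : Type*} [SeminormedAddCommGroup E] {r s ρ R : ℝ}
    (hr : r < s) (hR : ρ < R) : closedBall (0 : E) ρ \ ball 0 s ⊆ {x | r < ‖x‖ ∧ ‖x‖ < R} :=
  fun x ⟨h1, h2⟩ => by
    rw [mem_closedBall_zero_iff] at h1
    rw [mem_ball_zero_iff, not_lt] at h2
    exact ⟨by linarith, by linarith⟩

theorem sub_ne_zero_of_mem_sphere {z ζ : ℂ} (hz : ‖z‖ ≠ 1) (hζ : ζ ∈ sphere (0 : ℂ) 1) :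
    ζ - z ≠ 0 :=
  sub_ne_zero.2 fun h => hz (h ▸ mem_sphere_zero_iff_norm.1 hζ)

theorem one_sub_div_ne_zero_of_mem_sphere {z ζ : ℂ} (hz : ‖z‖ ≠ 1) (hζ : ζ ∈ sphere (0 : ℂ) 1) :
    1 - z / ζ ≠ 0 := by
  have hζ0 := ne_of_mem_sphere hζ one_ne_zero
  rw [one_sub_div hζ0]
  exact div_ne_zero (sub_ne_zero_of_mem_sphere hz hζ) hζ0

theorem ContinuousOn.div_one_sub_div {g : ℂ → ℂ} (hg : ContinuousOn g (sphere 0 1)) {z : ℂ}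
    (hz : ‖z‖ ≠ 1) : ContinuousOn (fun ζ => g ζ / (1 - z / ζ)) (sphere 0 1) :=
  hg.div (continuousOn_const.sub (continuousOn_const.div continuousOn_id
    fun _ hζ => ne_of_mem_sphere hζ one_ne_zero)) fun _ => one_sub_div_ne_zero_of_mem_sphere hz

theorem continuous_comp_exp_I_mul {f : ℂ → ℂ} (hf : ContinuousOn f (sphere 0 1)) :
    Continuous fun θ : ℝ => f (exp (I * θ)) :=
  hf.comp_continuous (by fun_prop) fun θ => by simp [norm_exp_I_mul_ofReal]

theorem intervalIntegrable_fourierCoeff'_integrand {f : ℂ → ℂ} (hf : ContinuousOn f (sphere 0 1))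
    (n : ℤ) : IntervalIntegrable (fun θ : ℝ => exp (-(I * n * θ)) * f (exp (I * θ)))
      MeasureTheory.volume 0 (2 * Real.pi) :=
  ((by fun_prop : Continuous fun θ : ℝ => exp (-(I * n * θ))).mul
    (continuous_comp_exp_I_mul hf)).intervalIntegrable _ _

theorem fourierCoeff'_congr {f g : ℂ → ℂ} (hfg : Set.EqOn f g (sphere 0 1)) (n : ℤ) :
    fourierCoeff' f n = fourierCoeff' g n := by
  unfold fourierCoeff'
  congr 1
  exact integral_congr fun θ _ => by
    rw [hfg (mem_sphere_zero_iff_norm.2 (norm_exp_I_mul_ofReal θ))]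

theorem fourierCoeff'_add {f g : ℂ → ℂ} (hf : ContinuousOn f (sphere 0 1))
    (hg : ContinuousOn g (sphere 0 1)) (n : ℤ) :
    fourierCoeff' (fun ζ => f ζ + g ζ) n = fourierCoeff' f n + fourierCoeff' g n := by
  simp only [fourierCoeff', mul_add]
  rw [integral_add (intervalIntegrable_fourierCoeff'_integrand hf n)
    (intervalIntegrable_fourierCoeff'_integrand hg n), mul_add]

theorem fourierCoeff'_const_mul (w : ℂ) (f : ℂ → ℂ) (n : ℤ) :
    fourierCoeff' (fun ζ => w * f ζ) n = w * fourierCoeff' f n := by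
  simp only [fourierCoeff', mul_left_comm _ w, integral_const_mul]

theorem fourierCoeff'_inv_mul (f : ℂ → ℂ) (n : ℤ) :
    fourierCoeff' (fun ζ => ζ⁻¹ * f ζ) n = fourierCoeff' f (n + 1) := by
  unfold fourierCoeff'
  congr 1
  refine integral_congr fun θ _ => ?_
  simp only [← exp_neg, ← mul_assoc, ← exp_add]
  push_cast
  ring_nf

theorem norm_fourierCoeff'_le {f : ℂ → ℂ} {C : ℝ} (hC : ∀ ζ ∈ sphere (0 : ℂ) 1, ‖f ζ‖ ≤ C) (n : ℤ) :
    ‖fourierCoeff' f n‖ ≤ C := by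
  have hint := norm_integral_le_of_norm_le_const (a := 0) (b := 2 * Real.pi)
    (f := fun θ : ℝ => exp (-(I * n * θ)) * f (exp (I * θ))) (C := C) fun θ _ => by
      rw [norm_mul, norm_exp]
      simpa using hC _ (mem_sphere_zero_iff_norm.2 (norm_exp_I_mul_ofReal θ))
  rw [fourierCoeff', norm_mul]
  calc _ ≤ ‖(1 / (2 * Real.pi) : ℂ)‖ * (C * |2 * Real.pi - 0|) := by gcongr
    _ = C := by
      rw [sub_zero, abs_of_pos Real.two_pi_pos, ← ofReal_ofNat, ← ofReal_mul, ← ofReal_one,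
        ← ofReal_div, norm_real, Real.norm_of_nonneg (by positivity)]
      field_simp

theorem circleIntegral_zpow_mul_eq_fourierCoeff' (f : ℂ → ℂ) (n : ℤ) :
    (∮ ζ in C(0, 1), ζ ^ (-n - 1) * f ζ) = 2 * Real.pi * I * fourierCoeff' f n := by
  have key : ∀ θ : ℝ, deriv (circleMap 0 1) θ • ((circleMap 0 1 θ) ^ (-n - 1) * f (circleMap 0 1 θ))
      = I * (exp (-(I * n * θ)) * f (exp (I * θ))) := by
    intro θ
    simp only [deriv_circleMap, circleMap, zero_add, ofReal_one, one_mul, smul_eq_mul,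
      mul_comm (θ : ℂ) I, ← exp_int_mul]
    rw [← mul_assoc, mul_comm _ I, mul_assoc I, ← exp_add]
    push_cast
    ring_nf
  rw [circleIntegral, integral_congr fun θ _ => key θ, integral_const_mul, fourierCoeff']
  field_simp

theorem fourierCoeff'_one_sub_div_mul (z : ℂ) {g : ℂ → ℂ} (hg : ContinuousOn g (sphere 0 1))
    (n : ℤ) :
    fourierCoeff' (fun ζ => (1 - z / ζ) * g ζ) n =
      fourierCoeff' g n - z * fourierCoeff' g (n + 1) := by
  have hcont : ContinuousOn (fun ζ : ℂ => -z * (ζ⁻¹ * g ζ)) (sphere 0 1) :=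
    continuousOn_const.mul ((continuousOn_inv₀.mono fun _ hζ =>
      ne_of_mem_sphere hζ one_ne_zero).mul hg)
  have hsplit : (fun ζ : ℂ => (1 - z / ζ) * g ζ) = fun ζ => g ζ + -z * (ζ⁻¹ * g ζ) := by
    ext ζ; ring
  rw [hsplit, fourierCoeff'_add hg hcont, fourierCoeff'_const_mul, fourierCoeff'_inv_mul]
  ring

theorem norm_fourierCoeff'_le_of_differentiableOn {f : ℂ → ℂ} {ρ M : ℝ} (hρ : 1 ≤ ρ)
    (hf : DifferentiableOn ℂ f (closedBall 0 ρ \ ball 0 1))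
    (hM : ∀ ζ ∈ sphere (0 : ℂ) ρ, ‖f ζ‖ ≤ M) (n : ℤ) :
    ‖fourierCoeff' f n‖ ≤ M * ρ ^ (-n) := by
  have hρ0 : 0 < ρ := by linarith
  have hg : DifferentiableOn ℂ (fun ζ => ζ ^ (-n - 1) * f ζ) (closedBall 0 ρ \ ball 0 1) :=
    fun ζ hζ => ((differentiableAt_zpow.mpr (Or.inl (by
      rintro rfl; simp at hζ))).differentiableWithinAt).mul (hf ζ hζ)
  have hshift : (∮ ζ in C(0, ρ), ζ ^ (-n - 1) * f ζ) = ∮ ζ in C(0, 1), ζ ^ (-n - 1) * f ζ :=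
    circleIntegral_eq_of_differentiable_on_annulus_off_countable one_pos hρ
      Set.countable_empty hg.continuousOn fun ζ hζ =>
        hg.differentiableAt (mem_nhds_iff.2 ⟨_, Set.sdiff_subset_sdiff ball_subset_closedBall
          ball_subset_closedBall, isOpen_ball.sdiff isClosed_closedBall, hζ.1⟩)
  have hbound := circleIntegral.norm_integral_le_of_norm_le_const
      (f := fun ζ => ζ ^ (-n - 1) * f ζ) (C := ρ ^ (-n - 1) * M) hρ0.le fun ζ hζ => by
    rw [norm_mul, norm_zpow, mem_sphere_zero_iff_norm.1 hζ]
    exact mul_le_mul_of_nonneg_left (hM ζ hζ) (zpow_nonneg hρ0.le _)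
  rw [hshift, circleIntegral_zpow_mul_eq_fourierCoeff', norm_mul, norm_mul, norm_I, mul_one,
    ← ofReal_ofNat, ← ofReal_mul, norm_real, Real.norm_of_nonneg Real.two_pi_pos.le] at hbound
  have hpow : ρ * (ρ ^ (-n - 1) * M) = M * ρ ^ (-n) := by
    rw [sub_eq_add_neg, zpow_add₀ hρ0.ne', zpow_neg_one]
    field_simp
  rw [mul_assoc, mul_assoc, hpow, ← mul_assoc] at hbound
  exact le_of_mul_le_mul_left hbound Real.two_pi_pos

theorem fourierCoeff'_eq_sub_of_div_one_sub_div {g : ℂ → ℂ} (hg : ContinuousOn g (sphere 0 1))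
    {z : ℂ} (hz : ‖z‖ ≠ 1) (n : ℤ) :
    fourierCoeff' g n = fourierCoeff' (fun ζ => g ζ / (1 - z / ζ)) n -
      z * fourierCoeff' (fun ζ => g ζ / (1 - z / ζ)) (n + 1) := by
  rw [← fourierCoeff'_one_sub_div_mul z (hg.div_one_sub_div hz)]
  exact fourierCoeff'_congr (fun ζ hζ => by
    field_simp [one_sub_div_ne_zero_of_mem_sphere hz hζ]) n

theorem fourierCoeff'_div_sub_mul {z : ℂ} (hz : ‖z‖ ≠ 1) (g : ℂ → ℂ) (n : ℤ) :
    fourierCoeff' (fun ζ => z / (ζ - z) * g ζ) n =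
      z * fourierCoeff' (fun ζ => g ζ / (1 - z / ζ)) (n + 1) := by
  rw [← fourierCoeff'_inv_mul, ← fourierCoeff'_const_mul]
  refine fourierCoeff'_congr (fun ζ hζ => ?_) n
  have hζ0 := ne_of_mem_sphere hζ one_ne_zero
  have hζz := sub_ne_zero_of_mem_sphere hz hζ
  field_simp

theorem summable_norm_fourierCoeff'_add_natCast {f : ℂ → ℂ} {ρ : ℝ} (hρ : 1 < ρ)
    (hf : DifferentiableOn ℂ f (closedBall 0 ρ \ ball 0 1)) (a : ℤ) :
    Summable fun m : ℕ => ‖fourierCoeff' f (a + m)‖ := by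
  have hρ0 : 0 < ρ := by linarith
  obtain ⟨M, hM⟩ := (isCompact_sphere (0 : ℂ) ρ).exists_bound_of_continuousOn
    (hf.continuousOn.mono (sphere_subset_closedBall_sdiff_ball hρ.le le_rfl))
  refine .of_nonneg_of_le (fun _ => norm_nonneg _)
    (fun m => (norm_fourierCoeff'_le_of_differentiableOn hρ.le hf hM _).trans_eq ?_)
    ((summable_geometric_of_lt_one (inv_nonneg.2 hρ0.le) (inv_lt_one_of_one_lt₀ hρ)).mul_left
      (M * ρ ^ (-a)))
  rw [neg_add, zpow_add₀ hρ0.ne', zpow_neg ρ m, zpow_natCast, inv_pow, mul_assoc]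

/-- for `ψ` analytic and nonvanishing on an annulus containing the unit circle,
`|z| < 1` and `ψ_z(ζ) = ψ(ζ)/(1 − z/ζ)`, the series
`∑_m [(ψ_z^{−1})_{j+m+1}(ψ_z)_{−m−k−1} − (ψ^{−1})_{j+m+1}ψ_{−m−k−1}]` converges absolutely
with sum `Q(j)·R(k)`, where `Q(j) = (ψ^{−1})_{j+1}` and
`R(k) = ∫_{|b|=1} b^{k+1}·(z/(b−z))·ψ(b) db/(2πib)`. -/
theorem rank_one_perturbation_identity (r R : ℝ) (hr : r < 1) (hR : 1 < R)
    (ψ : ℂ → ℂ)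
    (hψ : DifferentiableOn ℂ ψ {ζ : ℂ | r < ‖ζ‖ ∧ ‖ζ‖ < R})
    (hψ0 : ∀ ζ : ℂ, r < ‖ζ‖ → ‖ζ‖ < R → ψ ζ ≠ 0)
    (z : ℂ) (hz : ‖z‖ < 1) (j k : ℕ) :
    Summable (fun m : ℕ =>
      ‖fourierCoeff' (fun ζ => (1 - z / ζ) / ψ ζ) ((j : ℤ) + m + 1) *
            fourierCoeff' (fun ζ => ψ ζ / (1 - z / ζ)) (-((m : ℤ) + k + 1)) -
          fourierCoeff' (fun ζ => (ψ ζ)⁻¹) ((j : ℤ) + m + 1) *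
            fourierCoeff' ψ (-((m : ℤ) + k + 1))‖) ∧
    (∑' m : ℕ,
        (fourierCoeff' (fun ζ => (1 - z / ζ) / ψ ζ) ((j : ℤ) + m + 1) *
            fourierCoeff' (fun ζ => ψ ζ / (1 - z / ζ)) (-((m : ℤ) + k + 1)) -
          fourierCoeff' (fun ζ => (ψ ζ)⁻¹) ((j : ℤ) + m + 1) *
            fourierCoeff' ψ (-((m : ℤ) + k + 1)))) =
      fourierCoeff' (fun ζ => (ψ ζ)⁻¹) ((j : ℤ) + 1) *
        fourierCoeff' (fun b => z / (b - z) * ψ b) (-((k : ℤ) + 1)) := by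
  obtain ⟨ρ, hρ1, hρR⟩ := exists_between hR
  have hannulus := closedBall_sdiff_ball_subset (E := ℂ) hr hρR
  have hcircle := sphere_subset_closedBall_sdiff_ball (x := (0 : ℂ)) le_rfl hρ1.le
  have hψinv : DifferentiableOn ℂ (fun ζ => (ψ ζ)⁻¹) (closedBall 0 ρ \ ball 0 1) :=
    (hψ.inv fun ζ h => hψ0 ζ h.1 h.2).mono hannulus
  have hψc : ContinuousOn ψ (sphere 0 1) := hψ.continuousOn.mono (hcircle.trans hannulus)
  obtain ⟨B, hB⟩ := (isCompact_sphere (0 : ℂ) 1).exists_bound_of_continuousOn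
    (hψc.div_one_sub_div hz.ne)
  rw [fourierCoeff'_div_sub_mul hz.ne]
  have hQz (n : ℤ) : fourierCoeff' (fun ζ => (1 - z / ζ) / ψ ζ) n =
      fourierCoeff' (fun ζ => (ψ ζ)⁻¹) n - z * fourierCoeff' (fun ζ => (ψ ζ)⁻¹) (n + 1) :=
    fourierCoeff'_one_sub_div_mul z (hψinv.continuousOn.mono hcircle) n
  have hψb := fourierCoeff'_eq_sub_of_div_one_sub_div hψc hz.ne
  set c := fourierCoeff' (fun ζ => (ψ ζ)⁻¹)
  set b := fourierCoeff' (fun ζ => ψ ζ / (1 - z / ζ))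
  set u : ℕ → ℂ := fun m => z * c (j + m + 1) * b (-(m + k))
  have hu : Summable fun m => ‖u m‖ := by
    refine .of_nonneg_of_le (fun _ => norm_nonneg _) (fun m => ?_)
      ((summable_norm_fourierCoeff'_add_natCast hρ1 hψinv (j + 1)).mul_left (‖z‖ * B))
    rw [norm_mul, norm_mul, add_right_comm, mul_right_comm]
    gcongr
    exact norm_fourierCoeff'_le hB _
  have hterm (m : ℕ) : fourierCoeff' (fun ζ => (1 - z / ζ) / ψ ζ) ((j : ℤ) + m + 1) *
        b (-((m : ℤ) + k + 1)) - c ((j : ℤ) + m + 1) * fourierCoeff' ψ (-((m : ℤ) + k + 1)) =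
      u m - u (m + 1) := by
    rw [hQz, hψb]
    simp only [u]
    push_cast
    ring_nf
  simp only [hterm]
  refine ⟨summable_norm_sub_succ hu, (hasSum_sub_succ hu.of_norm).tsum_eq.trans ?_⟩
  simp only [u]
  push_cast
  ring_nf
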